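/- The cubic Σ is the preimage of the curve Γ under Φ̃: for every point (b₀ : b₁ : b₂) ∈ ℙ²(ℂ) with (b₀t − b₁)(b₁² − b₀b₂) ≠ 0 (so that both affine coordinates z = (b₁t − b₂)/(b₀t − b₁) and w = −b₁(b₀λ − b₁λ − b₁ + b₂)/(b₁² − b₀b₂) of Φ̃ are defined and finite), one has P_Γ(z, w) = 0 if and only if Σ(b₀, b₁, b₂) = 0. -/

import Mathlib

/-- The bidegree `(2,2)` polynomial `P_Γ(z, w)` defining the curve `Γ ⊂ ℙ¹×ℙ¹`. -/
noncomputable def PGamma (l t z w : ℂ) : ℂ :=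
  t ^ 2 * z ^ 2 - 2 * t * z ^ 2 * w + t ^ 2 * w ^ 2 - 2 * t * z * w ^ 2 + z ^ 2 * w ^ 2
    - 2 * l * t * z - 2 * l * t * w + 2 * (2 * (l + 1) * t - t ^ 2 - l) * z * w + l ^ 2

/-- The cubic `Σ ⊂ ℙ²(ℂ)`, ramification locus of `Φ̃`. -/
noncomputable def SigmaCubic (l t b₀ b₁ b₂ : ℂ) : ℂ :=
  -(l * t ^ 2) * b₀ ^ 2 * b₁ + l * t * b₀ ^ 2 * b₂
    + (l * t ^ 2 + l * t + t ^ 2) * b₀ * b₁ ^ 2 - (t ^ 2 + l) * b₁ ^ 3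
    - 2 * (l * t + t) * b₀ * b₁ * b₂ + (l + t + 1) * b₁ ^ 2 * b₂
    + t * b₀ * b₂ ^ 2 - b₁ * b₂ ^ 2

/-!
`Φ̃` is ramified along `Σ`: after clearing denominators, the pullback of `P_Γ` along `Φ̃` is
exactly `Σ²`. Hence, away from the poles of `Φ̃`, `P_Γ ∘ Φ̃` vanishes precisely where `Σ` does.
-/

/-- The bihomogenization of `P_Γ` at the point `((z₀ : z₁), (w₀ : w₁)) ∈ ℙ¹ × ℙ¹`. -/
def PGammaHom (l t z₀ z₁ w₀ w₁ : ℂ) : ℂ :=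
  t ^ 2 * z₀ ^ 2 * w₁ ^ 2 - 2 * t * z₀ ^ 2 * w₀ * w₁ + t ^ 2 * w₀ ^ 2 * z₁ ^ 2
    - 2 * t * z₀ * w₀ ^ 2 * z₁ + z₀ ^ 2 * w₀ ^ 2 - 2 * l * t * z₀ * z₁ * w₁ ^ 2
    - 2 * l * t * w₀ * z₁ ^ 2 * w₁ + 2 * (2 * (l + 1) * t - t ^ 2 - l) * z₀ * w₀ * z₁ * w₁
    + l ^ 2 * z₁ ^ 2 * w₁ ^ 2

theorem PGamma_div_div_mul {z₁ w₁ : ℂ} (l t z₀ w₀ : ℂ) (hz : z₁ ≠ 0) (hw : w₁ ≠ 0) :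
    PGamma l t (z₀ / z₁) (w₀ / w₁) * (z₁ ^ 2 * w₁ ^ 2) = PGammaHom l t z₀ z₁ w₀ w₁ := by
  rw [PGamma, PGammaHom]
  field_simp

theorem PGammaHom_pullback_eq_sigmaCubic_sq (l t b₀ b₁ b₂ : ℂ) :
    PGammaHom l t (b₁ * t - b₂) (b₀ * t - b₁)
        (-b₁ * (b₀ * l - b₁ * l - b₁ + b₂)) (b₁ ^ 2 - b₀ * b₂) =
      SigmaCubic l t b₀ b₁ b₂ ^ 2 := by
  rw [PGammaHom, SigmaCubic]
  ring

/-- The cubic `Σ` is the preimage of the curve `Γ` under `Φ̃`: for every point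
`(b₀ : b₁ : b₂) ∈ ℙ²(ℂ)` with `(b₀t − b₁)(b₁² − b₀b₂) ≠ 0` (so that both affine
coordinates `z = (b₁t − b₂)/(b₀t − b₁)` and `w = −b₁(b₀λ − b₁λ − b₁ + b₂)/(b₁² − b₀b₂)` of
`Φ̃` are defined and finite), one has `P_Γ(z, w) = 0` if and only if `Σ(b₀, b₁, b₂) = 0`. -/
theorem sigma_is_preimage_of_gamma (l t : ℂ)
    (b₀ b₁ b₂ : ℂ) (h : (b₀ * t - b₁) * (b₁ ^ 2 - b₀ * b₂) ≠ 0) :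
    PGamma l t ((b₁ * t - b₂) / (b₀ * t - b₁))
        (-b₁ * (b₀ * l - b₁ * l - b₁ + b₂) / (b₁ ^ 2 - b₀ * b₂)) = 0 ↔
      SigmaCubic l t b₀ b₁ b₂ = 0 := by
  obtain ⟨hz, hw⟩ := mul_ne_zero_iff.mp h
  have hden : (b₀ * t - b₁) ^ 2 * (b₁ ^ 2 - b₀ * b₂) ^ 2 ≠ 0 := by positivity
  rw [← mul_left_inj' hden, zero_mul, PGamma_div_div_mul l t _ _ hz hw,
    PGammaHom_pullback_eq_sigmaCubic_sq, sq_eq_zero_iff]
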